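/- One-step local confluence: if x̄ ↝′ w̄₁ and x̄ ↝′ w̄₂, then there exists a word w̄₃ such that each of w̄₁ and w̄₂ reduces to w̄₃ in at most one ↝′ step (i.e., w̄₁ = w̄₃ or w̄₁ ↝′ w̄₃, and w̄₂ = w̄₃ or w̄₂ ↝′ w̄₃). -/
import Mathlib


/-- The alphabet {l, r, λ, ρ, n}. -/
inductive Alpha : Type
  | l | r | lam | rho | n
deriving DecidableEq

/-- Finite words over the alphabet. -/
abbrev Word := List Alpha

/-- Immediate reduction ↝′ on words: x̄lλȳ ↝′ x̄ρȳ, x̄rλȳ ↝′ x̄ȳ, x̄λrȳ ↝′ x̄ȳ,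
x̄ρrȳ ↝′ x̄lȳ, x̄nnȳ ↝′ x̄ȳ. -/
inductive Step : Word → Word → Prop
  | llam (x y : Word) : Step (x ++ [.l, .lam] ++ y) (x ++ [.rho] ++ y)
  | rlam (x y : Word) : Step (x ++ [.r, .lam] ++ y) (x ++ y)
  | lamr (x y : Word) : Step (x ++ [.lam, .r] ++ y) (x ++ y)
  | rhor (x y : Word) : Step (x ++ [.rho, .r] ++ y) (x ++ [.l] ++ y)
  | nn (x y : Word) : Step (x ++ [.n, .n] ++ y) (x ++ y)

def Rules : List (Word × Word) :=
  [([.l, .lam], [.rho]), ([.r, .lam], []), ([.lam, .r], []), ([.rho, .r], [.l]), ([.n, .n], [])]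

lemma step_of_rule {p : Word × Word} (hp : p ∈ Rules) (x y : Word) :
    Step (x ++ p.1 ++ y) (x ++ p.2 ++ y) := by
  fin_cases hp
  · exact .llam x y
  · simpa using Step.rlam x y
  · simpa using Step.lamr x y
  · exact .rhor x y
  · simpa using Step.nn x y

lemma step_congr {u v u' v' : Word} (h : Step u v) (hu : u = u') (hv : v = v') : Step u' v' :=
  hu ▸ hv ▸ h

lemma step_inv {u v : Word} (h : Step u v) :
    ∃ p ∈ Rules, ∃ x y, u = x ++ p.1 ++ y ∧ v = x ++ p.2 ++ y := by
  cases h with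
  | llam x y => exact ⟨([.l, .lam], [.rho]), by simp [Rules], x, y, rfl, rfl⟩
  | rlam x y => exact ⟨([.r, .lam], []), by simp [Rules], x, y, rfl, by simp⟩
  | lamr x y => exact ⟨([.lam, .r], []), by simp [Rules], x, y, rfl, by simp⟩
  | rhor x y => exact ⟨([.rho, .r], [.l]), by simp [Rules], x, y, rfl, rfl⟩
  | nn x y => exact ⟨([.n, .n], []), by simp [Rules], x, y, rfl, by simp⟩

lemma lhs_pair {p : Word × Word} (hp : p ∈ Rules) : ∃ a b : Alpha, p.1 = [a, b] := by
  fin_cases hp <;> exact ⟨_, _, rfl⟩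

lemma rules_inj {p q : Word × Word} (hp : p ∈ Rules) (hq : q ∈ Rules) (h : p.1 = q.1) :
    p = q := by
  fin_cases hp <;> fin_cases hq <;> simp_all [Rules]

lemma overlap {α : Type*} {a b c d : α} {x1 x2 y1 y2 : List α}
    (h : x1 ++ a :: b :: y1 = x2 ++ c :: d :: y2) :
    (x1 = x2 ∧ a = c ∧ b = d ∧ y1 = y2) ∨
    (x2 = x1 ++ [a] ∧ b = c ∧ y1 = d :: y2) ∨
    (x1 = x2 ++ [c] ∧ d = a ∧ y2 = b :: y1) ∨
    (∃ z, x2 = x1 ++ a :: b :: z ∧ y1 = z ++ c :: d :: y2) ∨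
    (∃ z, x1 = x2 ++ c :: d :: z ∧ y2 = z ++ a :: b :: y1) := by
  rcases List.append_eq_append_iff.mp h with ⟨k, hk, he⟩ | ⟨k, hk, he⟩
  · match k, he with
    | [], he =>
      simp at he hk
      exact Or.inl ⟨hk.symm, he.1, he.2.1, he.2.2⟩
    | [e], he =>
      simp at he
      obtain ⟨rfl, h2, h3⟩ := he
      exact Or.inr (Or.inl ⟨hk, h2, h3⟩)
    | e :: f :: k', he =>
      simp at he
      obtain ⟨rfl, rfl, h3⟩ := he
      exact Or.inr (Or.inr (Or.inr (Or.inl ⟨k', hk, h3⟩)))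
  · match k, he with
    | [], he =>
      simp at he hk
      exact Or.inl ⟨hk, he.1.symm, he.2.1.symm, he.2.2.symm⟩
    | [e], he =>
      simp at he
      obtain ⟨rfl, h2, h3⟩ := he
      exact Or.inr (Or.inr (Or.inl ⟨hk, h2, h3⟩))
    | e :: f :: k', he =>
      simp at he
      obtain ⟨rfl, rfl, h3⟩ := he
      exact Or.inr (Or.inr (Or.inr (Or.inr ⟨k', hk, h3⟩)))

lemma crit {p1 p2 : Word × Word} (hp1 : p1 ∈ Rules) (hp2 : p2 ∈ Rules) {a b d : Alpha}
    (hab : p1.1 = [a, b]) (hbd : p2.1 = [b, d]) (x y : Word) :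
    ∃ w3, (x ++ p1.2 ++ d :: y = w3 ∨ Step (x ++ p1.2 ++ d :: y) w3) ∧
          (x ++ a :: (p2.2 ++ y) = w3 ∨ Step (x ++ a :: (p2.2 ++ y)) w3) := by
  fin_cases hp1 <;> fin_cases hp2 <;>
    simp only [List.cons.injEq, and_true] at hab <;>
    obtain ⟨h1, h2⟩ := hab <;> subst h1 <;> subst h2 <;>
    simp at hbd <;> subst hbd <;>
    first
      | (refine ⟨x ++ Alpha.r :: y, Or.inl ?_, Or.inl ?_⟩ <;> simp <;> done)
      | (refine ⟨x ++ Alpha.lam :: y, Or.inl ?_, Or.inl ?_⟩ <;> simp <;> done)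
      | (refine ⟨x ++ Alpha.n :: y, Or.inl ?_, Or.inl ?_⟩ <;> simp <;> done)
      | (refine ⟨x ++ [Alpha.l] ++ y, Or.inr (step_congr (Step.rhor x y) ?_ rfl), Or.inl ?_⟩ <;>
          simp <;> done)
      | (refine ⟨x ++ [Alpha.rho] ++ y, Or.inr (step_congr (Step.llam x y) ?_ rfl), Or.inl ?_⟩ <;>
          simp <;> done)

/-- One-step local confluence: if x̄ ↝′ w̄₁ and x̄ ↝′ w̄₂, then there is w̄₃ to which each
of w̄₁ and w̄₂ reduces in at most one ↝′ step. -/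
theorem one_step_local_confluence {x w1 w2 : Word} (h1 : Step x w1) (h2 : Step x w2) :
    ∃ w3 : Word, (w1 = w3 ∨ Step w1 w3) ∧ (w2 = w3 ∨ Step w2 w3) := by
  obtain ⟨p1, hp1, x1, y1, rfl, rfl⟩ := step_inv h1
  obtain ⟨p2, hp2, x2, y2, hu2, rfl⟩ := step_inv h2
  obtain ⟨a, b, hab⟩ := lhs_pair hp1
  obtain ⟨c, d, hcd⟩ := lhs_pair hp2
  rw [hab, hcd] at hu2
  simp only [List.append_assoc, List.cons_append, List.nil_append] at hu2
  rcases overlap hu2 with ⟨rfl, rfl, rfl, rfl⟩ | ⟨rfl, rfl, rfl⟩ | ⟨rfl, rfl, rfl⟩ |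
    ⟨z, rfl, rfl⟩ | ⟨z, rfl, rfl⟩
  · have : p1 = p2 := rules_inj hp1 hp2 (hab.trans hcd.symm)
    subst this
    exact ⟨_, Or.inl rfl, Or.inl rfl⟩
  · obtain ⟨w3, hA, hB⟩ := crit hp1 hp2 hab hcd x1 y2
    exact ⟨w3, hA, by simpa using hB⟩
  · obtain ⟨w3, hA, hB⟩ := crit hp2 hp1 hcd hab x2 y1
    exact ⟨w3, by simpa using hB, hA⟩
  · exact ⟨x1 ++ p1.2 ++ (z ++ p2.2 ++ y2),
      Or.inr (step_congr (step_of_rule hp2 (x1 ++ p1.2 ++ z) y2) (by rw [hcd]; simp) (by simp)),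
      Or.inr (step_congr (step_of_rule hp1 x1 (z ++ p2.2 ++ y2)) (by rw [hab]; simp) (by simp))⟩
  · exact ⟨x2 ++ p2.2 ++ (z ++ p1.2 ++ y1),
      Or.inr (step_congr (step_of_rule hp2 x2 (z ++ p1.2 ++ y1)) (by rw [hcd]; simp) (by simp)),
      Or.inr (step_congr (step_of_rule hp1 (x2 ++ p2.2 ++ z) y1) (by rw [hab]; simp) (by simp))⟩
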